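/- arXiv:2506.00346 — 2 statements merged into one kernel-verified Lean document; each statement's English description precedes it below -/
import Mathlib

section
/- For every Hermitian matrix σ ∈ ℂ^{m×m}, every s ∈ [0,T] and every t ≥ 0, the trace-norm inequality ‖e^{tA(s)} σ e^{tA(s)†}‖₁ ≤ ‖σ‖₁ holds. -/
/-!
The matrix `A = -iH - ½ ∑ γₖ LₖᴴLₖ` is dissipative, `A + Aᴴ = -∑ γₖ LₖᴴLₖ ≤ 0`, so
`u ↦ ‖e^{uA} x‖²` has derivative `⟨e^{uA} x, (A + Aᴴ) e^{uA} x⟩ ≤ 0` and `E = e^{tA}` is a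
contraction, `EᴴE ≤ 1`, for `t ≥ 0`. Split a Hermitian `σ = σ₊ - σ₋` into positive and negative
parts, so that `‖σ‖₁ = Tr σ₊ + Tr σ₋`. Then `EσEᴴ = Eσ₊Eᴴ - Eσ₋Eᴴ`, where `Tr Eσ±Eᴴ ≤ Tr σ±`
since `EᴴE ≤ 1`, and a difference of positive matrices has trace norm at most the sum of their
traces (compare diagonal entries in an eigenbasis of the difference).
-/

open Matrix Set
open scoped ComplexOrder

attribute [local instance] Matrix.normedAddCommGroup Matrix.normedSpace

/-- Trace norm: `‖X‖₁ = Tr √(XᴴX)`. -/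
noncomputable def traceNorm {m : ℕ} (X : Matrix (Fin m) (Fin m) ℂ) : ℝ :=
  (((Matrix.posSemidef_conjTranspose_mul_self X).1.eigenvectorUnitary.1 *
    diagonal (((↑) : ℝ → ℂ) ∘ (Real.sqrt ·) ∘ (Matrix.posSemidef_conjTranspose_mul_self X).1.eigenvalues) *
    (star (Matrix.posSemidef_conjTranspose_mul_self X).1.eigenvectorUnitary :
      Matrix (Fin m) (Fin m) ℂ)).trace).re

/-- `A(t) = -i H(t) - (1/2) ∑ₖ γₖ(t) Lₖᴴ Lₖ`. -/
noncomputable def Aop {m K : ℕ} (H : ℝ → Matrix (Fin m) (Fin m) ℂ)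
    (L : Fin K → Matrix (Fin m) (Fin m) ℂ) (γ : Fin K → ℝ → ℝ) (t : ℝ) : Matrix (Fin m) (Fin m) ℂ :=
  (-Complex.I) • H t - (1 / 2 : ℂ) • ∑ k, (γ k t : ℂ) • ((L k)ᴴ * L k)

namespace Matrix

section RCLike
variable {n 𝕜 : Type*} [Fintype n] [RCLike 𝕜]

lemma IsHermitian.posSemidef_of_re_dotProduct_nonneg {M : Matrix n n 𝕜} (hM : M.IsHermitian)
    (h : ∀ x, 0 ≤ RCLike.re (star x ⬝ᵥ M *ᵥ x)) : M.PosSemidef :=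
  .of_dotProduct_mulVec_nonneg hM fun x =>
    RCLike.nonneg_iff.mpr ⟨h x, hM.im_star_dotProduct_mulVec_self x⟩

variable [DecidableEq n]

lemma IsHermitian.trace_cfc {A : Matrix n n 𝕜} (hA : A.IsHermitian) (f : ℝ → ℝ) :
    (cfc f A).trace = ∑ i, (f (hA.eigenvalues i) : 𝕜) := by
  rw [hA.cfc_eq, IsHermitian.cfc, Unitary.conjStarAlgAut_apply, trace_mul_cycle,
    Unitary.coe_star_mul_self, one_mul, trace_diagonal]
  rfl

open scoped MatrixOrder in
lemma PosSemidef.trace_mul_mul_conjTranspose_le {P C : Matrix n n 𝕜} (hP : P.PosSemidef)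
    (hC : (1 - Cᴴ * C).PosSemidef) : (C * P * Cᴴ).trace ≤ P.trace := by
  set S := CFC.sqrt P
  have hS : Sᴴ = S := (CFC.sqrt_nonneg P).posSemidef.1
  have hSS : S * S = P := CFC.sqrt_mul_sqrt_self P hP.nonneg
  have key := (hC.conjTranspose_mul_mul_same S).trace_nonneg
  rw [hS, mul_sub, sub_mul, mul_one, trace_sub, hSS, sub_nonneg] at key
  calc (C * P * Cᴴ).trace = (S * (Cᴴ * C) * S).trace := by
        rw [← hSS, trace_mul_cycle, ← mul_assoc, ← mul_assoc, trace_mul_cycle]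
        simp only [mul_assoc]
    _ ≤ P.trace := key

end RCLike

section Exponential
variable {n : Type*} [Fintype n] [DecidableEq n]
open NormedSpace

lemma exp_smul_conjTranspose (A : Matrix n n ℂ) (u : ℝ) :
    exp (u • Aᴴ) = (exp (u • A))ᴴ := by
  rw [← exp_conjTranspose, conjTranspose_smul, star_trivial]

lemma hasDerivAt_re_dotProduct_conjTranspose_exp_mul_exp (A : Matrix n n ℂ) (x : n → ℂ)
    (u : ℝ) :
    HasDerivAt (fun u : ℝ => (star x ⬝ᵥ ((exp (u • A))ᴴ * exp (u • A)) *ᵥ x).re)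
      (star x ⬝ᵥ ((exp (u • A))ᴴ * (Aᴴ + A) * exp (u • A)) *ᵥ x).re u := by
  -- The ambient elementwise norm is not submultiplicative; `exp` is differentiated in the
  -- operator norm.
  let _ : NormedAddCommGroup (Matrix n n ℂ) := Matrix.linftyOpNormedAddCommGroup
  let _ : NormedRing (Matrix n n ℂ) := Matrix.linftyOpNormedRing
  let _ : NormedAlgebra ℝ (Matrix n n ℂ) := Matrix.linftyOpNormedAlgebra
  let φ : Matrix n n ℂ →L[ℝ] ℝ := LinearMap.toContinuousLinearMap
    { toFun := fun M => (star x ⬝ᵥ M *ᵥ x).re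
      map_add' := fun M N => by simp [add_mulVec]
      map_smul' := fun c M => by simp [smul_mulVec] }
  have h : HasDerivAt (fun u : ℝ => φ (exp (u • Aᴴ) * exp (u • A)))
      (φ (exp (u • Aᴴ) * Aᴴ * exp (u • A) + exp (u • Aᴴ) * (A * exp (u • A)))) u :=
    φ.hasFDerivAt.comp_hasDerivAt u
      ((hasDerivAt_exp_smul_const Aᴴ u).mul (hasDerivAt_exp_smul_const' A u))
  simp only [← exp_smul_conjTranspose]
  refine h.congr_deriv ?_
  change φ _ = φ _
  congr 1
  noncomm_ring

lemma posSemidef_one_sub_conjTranspose_exp_mul_exp {A : Matrix n n ℂ}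
    (hA : (-(A + Aᴴ)).PosSemidef) {t : ℝ} (ht : 0 ≤ t) :
    (1 - (exp (t • A))ᴴ * exp (t • A)).PosSemidef := by
  refine IsHermitian.posSemidef_of_re_dotProduct_nonneg
    (by simp [IsHermitian, conjTranspose_sub]) fun x => ?_
  have hanti : Antitone fun u : ℝ => (star x ⬝ᵥ ((exp (u • A))ᴴ * exp (u • A)) *ᵥ x).re := by
    refine antitone_of_hasDerivAt_nonpos
      (hasDerivAt_re_dotProduct_conjTranspose_exp_mul_exp A x) fun u => ?_
    have hconj := (hA.conjTranspose_mul_mul_same (exp (u • A))).re_dotProduct_nonneg x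
    rw [mul_neg, neg_mul, neg_mulVec, dotProduct_neg, map_neg, add_comm] at hconj
    exact neg_nonneg.mp hconj
  have := hanti ht
  simp only [zero_smul, exp_zero, conjTranspose_one, mul_one] at this
  simpa [sub_mulVec, dotProduct_sub] using this

end Exponential

end Matrix

section TraceNorm
variable {m : ℕ}

lemma traceNorm_eq_re_trace_cfc_sqrt (X : Matrix (Fin m) (Fin m) ℂ) :
    traceNorm X = (cfc Real.sqrt (Xᴴ * X)).trace.re := by
  rw [(posSemidef_conjTranspose_mul_self X).1.cfc_eq, IsHermitian.cfc,
    Unitary.conjStarAlgAut_apply]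
  rfl

lemma Matrix.IsHermitian.traceNorm_eq_sum_abs_eigenvalues {X : Matrix (Fin m) (Fin m) ℂ}
    (hX : X.IsHermitian) : traceNorm X = ∑ i, |hX.eigenvalues i| := by
  have hsq : Xᴴ * X = cfc (fun x : ℝ => x * x) X := by
    rw [hX.eq, cfc_mul (fun x : ℝ => x) (fun x : ℝ => x) X, cfc_id' ℝ X]
  rw [traceNorm_eq_re_trace_cfc_sqrt, hsq, ← cfc_comp' Real.sqrt (fun x : ℝ => x * x) X,
    hX.trace_cfc]
  simp [Real.sqrt_mul_self_eq_abs]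

lemma traceNorm_sub_le {P Q : Matrix (Fin m) (Fin m) ℂ} (hP : P.PosSemidef)
    (hQ : Q.PosSemidef) : traceNorm (P - Q) ≤ (P.trace + Q.trace).re := by
  have hX : (P - Q).IsHermitian := hP.1.sub hQ.1
  set U : Matrix (Fin m) (Fin m) ℂ := (hX.eigenvectorUnitary : Matrix (Fin m) (Fin m) ℂ)
  have htr : ∀ R : Matrix (Fin m) (Fin m) ℂ, (Uᴴ * R * U).trace = R.trace := fun R => by
    rw [trace_mul_cycle, ← star_eq_conjTranspose,
      mem_unitaryGroup_iff.mp hX.eigenvectorUnitary.2, one_mul]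
  have hdiag : ∀ i, hX.eigenvalues i = ((Uᴴ * P * U) i i).re - ((Uᴴ * Q * U) i i).re := by
    intro i
    have := congrFun₂ hX.conjStarAlgAut_star_eigenvectorUnitary i i
    rw [Unitary.conjStarAlgAut_star_apply, mul_sub, sub_mul, diagonal_apply_eq] at this
    simpa [star_eq_conjTranspose] using congrArg Complex.re this.symm
  have hPdiag : ∀ i, 0 ≤ ((Uᴴ * P * U) i i).re := fun i =>
    Complex.re_le_re ((hP.conjTranspose_mul_mul_same U).diag_nonneg (i := i))
  have hQdiag : ∀ i, 0 ≤ ((Uᴴ * Q * U) i i).re := fun i =>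
    Complex.re_le_re ((hQ.conjTranspose_mul_mul_same U).diag_nonneg (i := i))
  rw [hX.traceNorm_eq_sum_abs_eigenvalues, ← htr P, ← htr Q, trace, trace,
    ← Finset.sum_add_distrib, Complex.re_sum]
  refine Finset.sum_le_sum fun i _ => ?_
  rw [diag_apply, diag_apply, Complex.add_re, hdiag i, abs_sub_le_iff]
  constructor <;> linarith [hPdiag i, hQdiag i]

open scoped MatrixOrder in
lemma Matrix.IsHermitian.exists_posSemidef_sub_eq_traceNorm_eq {σ : Matrix (Fin m) (Fin m) ℂ}
    (hσ : σ.IsHermitian) :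
    ∃ P Q : Matrix (Fin m) (Fin m) ℂ, P.PosSemidef ∧ Q.PosSemidef ∧ σ = P - Q ∧
      traceNorm σ = (P.trace + Q.trace).re := by
  refine ⟨cfc (fun x : ℝ => max x 0) σ, cfc (fun x : ℝ => max (-x) 0) σ,
    (cfc_nonneg fun x _ => le_max_right _ _).posSemidef,
    (cfc_nonneg fun x _ => le_max_right _ _).posSemidef, ?_, ?_⟩
  · rw [← cfc_sub (fun x : ℝ => max x 0) (fun x : ℝ => max (-x) 0) σ]
    simp only [max_zero_sub_max_neg_zero_eq_self, cfc_id' ℝ σ]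
  · rw [← trace_add, ← cfc_add σ (fun x : ℝ => max x 0) (fun x : ℝ => max (-x) 0),
      hσ.trace_cfc, hσ.traceNorm_eq_sum_abs_eigenvalues]
    simp [max_zero_add_max_neg_zero_eq_abs_self]

lemma traceNorm_mul_mul_conjTranspose_le {σ C : Matrix (Fin m) (Fin m) ℂ}
    (hσ : σ.IsHermitian) (hC : (1 - Cᴴ * C).PosSemidef) :
    traceNorm (C * σ * Cᴴ) ≤ traceNorm σ := by
  obtain ⟨P, Q, hP, hQ, rfl, hPQ⟩ := hσ.exists_posSemidef_sub_eq_traceNorm_eq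
  have hsplit : C * (P - Q) * Cᴴ = C * P * Cᴴ - C * Q * Cᴴ := by noncomm_ring
  calc traceNorm (C * (P - Q) * Cᴴ)
      ≤ ((C * P * Cᴴ).trace + (C * Q * Cᴴ).trace).re :=
        hsplit ▸ traceNorm_sub_le (hP.mul_mul_conjTranspose_same C)
          (hQ.mul_mul_conjTranspose_same C)
    _ ≤ (P.trace + Q.trace).re :=
        Complex.re_le_re (add_le_add (hP.trace_mul_mul_conjTranspose_le hC)
          (hQ.trace_mul_mul_conjTranspose_le hC))
    _ = traceNorm (P - Q) := hPQ.symm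

end TraceNorm

lemma Aop_add_conjTranspose {m K : ℕ} {H : ℝ → Matrix (Fin m) (Fin m) ℂ} {s : ℝ}
    (hH : (H s).IsHermitian) (L : Fin K → Matrix (Fin m) (Fin m) ℂ) (γ : Fin K → ℝ → ℝ) :
    Aop H L γ s + (Aop H L γ s)ᴴ = -∑ k, (γ k s : ℂ) • ((L k)ᴴ * L k) := by
  have hterm : ∀ k, ((γ k s : ℂ) • ((L k)ᴴ * L k))ᴴ = (γ k s : ℂ) • ((L k)ᴴ * L k) := fun k => by
    simp [conjTranspose_smul]
  simp only [Aop, conjTranspose_sub, conjTranspose_smul, conjTranspose_sum, hterm, hH.eq]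
  simp only [star_neg, Complex.star_def, Complex.conj_I, neg_neg, map_div₀, map_one,
    map_ofNat]
  module

lemma posSemidef_neg_Aop_add_conjTranspose {m K : ℕ} {H : ℝ → Matrix (Fin m) (Fin m) ℂ}
    {s : ℝ} (hH : (H s).IsHermitian) (L : Fin K → Matrix (Fin m) (Fin m) ℂ)
    {γ : Fin K → ℝ → ℝ} (hγ : ∀ k, 0 ≤ γ k s) : (-(Aop H L γ s + (Aop H L γ s)ᴴ)).PosSemidef := by
  rw [Aop_add_conjTranspose hH, neg_neg]
  exact posSemidef_sum _ fun k _ =>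
    (posSemidef_conjTranspose_mul_self (L k)).smul (Complex.zero_le_real.mpr (hγ k))

theorem stmt_2_general {m K : ℕ}
    (H : ℝ → Matrix (Fin m) (Fin m) ℂ) (hH : ∀ t, (H t).IsHermitian)
    (L : Fin K → Matrix (Fin m) (Fin m) ℂ)
    (γ : Fin K → ℝ → ℝ) (hγ : ∀ k t, 0 ≤ γ k t)
    (σ : Matrix (Fin m) (Fin m) ℂ) (hσ : σ.IsHermitian)
    (s : ℝ) (t : ℝ) (ht : 0 ≤ t) :
    traceNorm (NormedSpace.exp (t • Aop H L γ s) * σ *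
      NormedSpace.exp (t • (Aop H L γ s)ᴴ)) ≤ traceNorm σ := by
  have hdissipative := posSemidef_neg_Aop_add_conjTranspose (hH s) L (fun k => hγ k s)
  rw [exp_smul_conjTranspose]
  exact traceNorm_mul_mul_conjTranspose_le hσ
    (posSemidef_one_sub_conjTranspose_exp_mul_exp hdissipative ht)

theorem stmt_2 {m K : ℕ} (hm : 1 ≤ m) (hK : 1 ≤ K)
    (H : ℝ → Matrix (Fin m) (Fin m) ℂ) (hH : ∀ t, (H t).IsHermitian)
    (L : Fin K → Matrix (Fin m) (Fin m) ℂ)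
    (γ : Fin K → ℝ → ℝ) (hγc : ∀ k, Continuous (γ k)) (hγ : ∀ k t, 0 ≤ γ k t)
    (T : ℝ) (hT : 0 < T)
    (σ : Matrix (Fin m) (Fin m) ℂ) (hσ : σ.IsHermitian)
    (s : ℝ) (hs : s ∈ Set.Icc (0 : ℝ) T) (t : ℝ) (ht : 0 ≤ t) :
    traceNorm (NormedSpace.exp (t • Aop H L γ s) * σ *
      NormedSpace.exp (t • (Aop H L γ s)ᴴ)) ≤ traceNorm σ :=
  stmt_2_general H hH L γ hγ σ hσ s t ht
end

section
/- For every τ > 0, every n, and every Hermitian positive semidefinite matrix q ∈ ℂ^{m×m}, the one-step backward FREM output Ψ(t_{n+1}, q) is Hermitian and positive semidefinite. -/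
open Matrix Set
open scoped ComplexOrder

attribute [local instance] Matrix.normedAddCommGroup Matrix.normedSpace

/-- Backward full-rank exponential midpoint one-step map `Ψ(tₙ₊₁, q)`;
the argument `tn1` is the time `tₙ₊₁`, so that `tₙ₊₁⁄₂ = tn1 - τ/2`. -/
noncomputable def Psi {m K : ℕ} (H : ℝ → Matrix (Fin m) (Fin m) ℂ)
    (L : Fin K → Matrix (Fin m) (Fin m) ℂ) (γ : Fin K → ℝ → ℝ) (τ tn1 : ℝ) (q : Matrix (Fin m) (Fin m) ℂ) : Matrix (Fin m) (Fin m) ℂ :=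
  NormedSpace.exp (τ • (Aop H L γ (tn1 - τ / 2))ᴴ) * q *
      NormedSpace.exp (τ • Aop H L γ (tn1 - τ / 2)) +
    (τ : ℂ) • ∑ k, (γ k (tn1 - τ / 2) : ℂ) •
      (NormedSpace.exp ((τ / 2) • (Aop H L γ (tn1 - τ / 2))ᴴ) * (L k)ᴴ *
        (NormedSpace.exp ((τ / 2) • (Aop H L γ tn1)ᴴ) *
          (q + (τ / 2 : ℂ) • ∑ j, (γ j tn1 : ℂ) • ((L j)ᴴ * q * L j)) *
          NormedSpace.exp ((τ / 2) • Aop H L γ tn1)) * L k *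
        NormedSpace.exp ((τ / 2) • Aop H L γ (tn1 - τ / 2)))

/-!
Every stage of the scheme is built from congruences `X ↦ Bᴴ X B` (with `B` a jump operator or
the exponential of `c • A`, whose adjoint is the exponential of `c • Aᴴ`), sums, and scalings by
the nonnegative reals `τ`, `τ/2`, `γₖ(t)`; each of these operations preserves positive
semidefiniteness.
-/

namespace Matrix

variable {m n : Type*} [Fintype m] [Fintype n]

theorem exp_real_smul_conjTranspose [DecidableEq n] (c : ℝ) (A : Matrix n n ℂ) :
    NormedSpace.exp (c • Aᴴ) = (NormedSpace.exp (c • A))ᴴ := by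
  rw [← exp_conjTranspose, conjTranspose_smul, star_trivial]

theorem posSemidef_sum_ofReal_smul_conjTranspose_mul_mul_same {ι : Type*} [Fintype ι]
    {c : ι → ℝ} (hc : ∀ k, 0 ≤ c k) {Q : Matrix m m ℂ} (hQ : Q.PosSemidef)
    (B : ι → Matrix m n ℂ) : (∑ k, (c k : ℂ) • ((B k)ᴴ * Q * B k)).PosSemidef :=
  posSemidef_sum _ fun k _ =>
    (hQ.conjTranspose_mul_mul_same (B k)).smul (Complex.zero_le_real.2 (hc k))

end Matrix

theorem stmt_8_general {m K : ℕ}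
    (H : ℝ → Matrix (Fin m) (Fin m) ℂ)
    (L : Fin K → Matrix (Fin m) (Fin m) ℂ)
    (γ : Fin K → ℝ → ℝ) (hγ : ∀ k t, 0 ≤ γ k t)
    (τ : ℝ) (hτ : 0 < τ) (n : ℕ)
    (q : Matrix (Fin m) (Fin m) ℂ) (hq : q.PosSemidef) :
    (Psi H L γ τ (((n : ℝ) + 1) * τ) q).PosSemidef := by
  unfold Psi
  set t := ((n : ℝ) + 1) * τ
  simp only [exp_real_smul_conjTranspose]
  set E := NormedSpace.exp (τ • Aop H L γ (t - τ / 2))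
  set E₁ := NormedSpace.exp ((τ / 2) • Aop H L γ t)
  set E₂ := NormedSpace.exp ((τ / 2) • Aop H L γ (t - τ / 2))
  have hτ₂ : (0 : ℂ) ≤ (τ / 2 : ℂ) := by exact_mod_cast Complex.zero_le_real.2 (half_pos hτ).le
  have hq_jump : (q + (τ / 2 : ℂ) • ∑ j, (γ j t : ℂ) • ((L j)ᴴ * q * L j)).PosSemidef :=
    hq.add ((posSemidef_sum_ofReal_smul_conjTranspose_mul_mul_same (hγ · t) hq L).smul hτ₂)
  set q₁₂ := E₁ᴴ * (q + (τ / 2 : ℂ) • ∑ j, (γ j t : ℂ) • ((L j)ᴴ * q * L j)) * E₁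
  have hreassoc : ∀ k, E₂ᴴ * (L k)ᴴ * q₁₂ * L k * E₂ = (L k * E₂)ᴴ * q₁₂ * (L k * E₂) := by
    simp [conjTranspose_mul, mul_assoc]
  simp only [hreassoc]
  exact (hq.conjTranspose_mul_mul_same E).add
    ((posSemidef_sum_ofReal_smul_conjTranspose_mul_mul_same (hγ · (t - τ / 2))
      (hq_jump.conjTranspose_mul_mul_same E₁) fun k => L k * E₂).smul
      (Complex.zero_le_real.2 hτ.le))

theorem stmt_8 {m K : ℕ} (hm : 1 ≤ m) (hK : 1 ≤ K)
    (H : ℝ → Matrix (Fin m) (Fin m) ℂ) (hH : ∀ t, (H t).IsHermitian)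
    (L : Fin K → Matrix (Fin m) (Fin m) ℂ)
    (γ : Fin K → ℝ → ℝ) (hγc : ∀ k, Continuous (γ k)) (hγ : ∀ k t, 0 ≤ γ k t)
    (T : ℝ) (hT : 0 < T)
    (τ : ℝ) (hτ : 0 < τ) (n : ℕ)
    (q : Matrix (Fin m) (Fin m) ℂ) (hq : q.PosSemidef) :
    (Psi H L γ τ (((n : ℝ) + 1) * τ) q).PosSemidef :=
  stmt_8_general H L γ hγ τ hτ n q hq
end
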